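/- arXiv:1502.00546 — 6 statements merged into one kernel-verified Lean document; each statement's English description precedes it below -/
import Mathlib

section
/- Let (Y_j) be i.i.d. positive integer-valued random variables, S_m = Y_1 + ... + Y_m, and for i ∈ ℕ let E_i be the event that i = S_m for some m. Then for any integers 0 = i_0 < i_1 < ... < i_n, the probability of the intersection of the events E_{i_1}, ..., E_{i_n} equals the product over k from 1 to n of P(E_{i_k - i_{k-1}}). -/
/-!
Split the intersection according to the time `m` at which the walk hits `i₁`; this time is
unique because the steps are positive. On `{S_m = i₁}` the remaining events are renewal events
of the shifted sequence `Y_m, Y_{m+1}, …`, which is independent of `S_m` and has the same law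
as `Y`. Summing over `m` peels off the factor `ℙ(E_{i₁})`, and induction on `n`, uniformly in
the shift, gives the product.
-/

open MeasureTheory ProbabilityTheory Finset Function

namespace Renewal

variable {Ω : Type*} {mΩ : MeasurableSpace Ω} {μ : Measure Ω} {Y : ℕ → Ω → ℕ}

def shiftedSum (Y : ℕ → Ω → ℕ) (a m : ℕ) (ω : Ω) : ℕ := ∑ j ∈ range m, Y (a + j) ω

def renewalEvent (Y : ℕ → Ω → ℕ) (a d : ℕ) : Set Ω := ⋃ m, shiftedSum Y a m ⁻¹' {d}

lemma shiftedSum_add (a m l : ℕ) (ω : Ω) :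
    shiftedSum Y a (m + l) ω = shiftedSum Y a m ω + shiftedSum Y (a + m) l ω := by
  simp only [shiftedSum, sum_range_add, add_assoc]

lemma monotone_shiftedSum (a : ℕ) (ω : Ω) : Monotone (shiftedSum Y a · ω) := fun m l hml => by
  obtain ⟨l, rfl⟩ := Nat.exists_eq_add_of_le hml
  simp only [shiftedSum_add, Nat.le_add_right]

lemma strictMono_shiftedSum (hpos : ∀ j ω, 0 < Y j ω) (a : ℕ) (ω : Ω) :
    StrictMono (shiftedSum Y a · ω) :=
  strictMono_nat_of_lt_succ fun m => by simp [shiftedSum, sum_range_succ, hpos]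

lemma pairwise_disjoint_shiftedSum_preimage (hpos : ∀ j ω, 0 < Y j ω) (a d : ℕ) :
    Pairwise (Disjoint on fun m => shiftedSum Y a m ⁻¹' {d}) := fun _ _ hml =>
  Set.disjoint_left.2 fun ω hm hl =>
    hml <| (strictMono_shiftedSum hpos a ω).injective <| (hm : _ = d).trans (hl : _ = d).symm

lemma renewalEvent_inter_biInter {ι : Type*} (s : Finset ι) (a d : ℕ) (f : ι → ℕ) :
    renewalEvent Y a d ∩ ⋂ k ∈ s, renewalEvent Y a (d + f k) =
      ⋃ m, shiftedSum Y a m ⁻¹' {d} ∩ ⋂ k ∈ s, renewalEvent Y (a + m) (f k) := by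
  ext ω
  simp only [renewalEvent, Set.mem_inter_iff, Set.mem_iUnion, Set.mem_iInter, Set.mem_preimage,
    Set.mem_singleton_iff]
  constructor
  · rintro ⟨⟨m, hm⟩, h⟩
    refine ⟨m, hm, fun k hk => ?_⟩
    obtain ⟨l, hl⟩ := h k hk
    rcases le_or_gt m l with hml | hlm
    · obtain ⟨l, rfl⟩ := Nat.exists_eq_add_of_le hml
      exact ⟨l, by rw [shiftedSum_add] at hl; omega⟩
    -- the walk passed `d + f k` no later than `d`, so `f k = 0`
    · have : shiftedSum Y a l ω ≤ shiftedSum Y a m ω := monotone_shiftedSum a ω hlm.le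
      exact ⟨0, by simp only [shiftedSum, range_zero, sum_empty]; omega⟩
  · rintro ⟨m, hm, h⟩
    refine ⟨⟨m, hm⟩, fun k hk => ?_⟩
    obtain ⟨l, hl⟩ := h k hk
    exact ⟨m + l, by rw [shiftedSum_add, hm, hl]⟩

lemma measurable_shiftedSum {m' : MeasurableSpace Ω} {a m : ℕ}
    (hY : ∀ j < m, Measurable[m'] (Y (a + j))) : Measurable[m'] (shiftedSum Y a m) :=
  Finset.measurable_sum _ fun j hj => hY j (mem_range.1 hj)

lemma measurableSet_renewalEvent {m' : MeasurableSpace Ω} {a : ℕ}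
    (hY : ∀ j, Measurable[m'] (Y (a + j))) (d : ℕ) : MeasurableSet[m'] (renewalEvent Y a d) :=
  .iUnion fun _ => measurable_shiftedSum (fun j _ => hY j) (measurableSet_singleton d)

lemma measure_renewalEvent_eq_tsum (hmeas : ∀ j, Measurable (Y j)) (hpos : ∀ j ω, 0 < Y j ω)
    (a d : ℕ) : μ (renewalEvent Y a d) = ∑' m, μ (shiftedSum Y a m ⁻¹' {d}) :=
  measure_iUnion (pairwise_disjoint_shiftedSum_preimage hpos a d) fun _ =>
    measurable_shiftedSum (fun _ _ => hmeas _) (measurableSet_singleton d)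

lemma measure_shiftedSum_preimage_inter (hmeas : ∀ j, Measurable (Y j)) (hindep : iIndepFun Y μ)
    (a m c : ℕ) {B : Set Ω}
    (hB : MeasurableSet[⨆ j ∈ Set.Ici (a + m), MeasurableSpace.comap (Y j) inferInstance] B) :
    μ (shiftedSum Y a m ⁻¹' {c} ∩ B) = μ (shiftedSum Y a m ⁻¹' {c}) * μ B := by
  have hpast : Measurable[⨆ j ∈ Set.Iio (a + m), MeasurableSpace.comap (Y j) inferInstance]
      (shiftedSum Y a m) :=
    measurable_shiftedSum fun j hj => .of_comap_le <|
      le_biSup (fun j => MeasurableSpace.comap (Y j) inferInstance) (by simpa using hj)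
  exact (Indep_iff _ _ _).1 (indep_iSup_of_disjoint (fun j => (hmeas j).comap_le) hindep
    (Set.Iio_disjoint_Ici le_rfl)) _ _ (hpast (measurableSet_singleton c)) hB

lemma map_shift_eq_infinitePi (hmeas : ∀ j, Measurable (Y j)) (hindep : iIndepFun Y μ)
    (hident : ∀ j, IdentDistrib (Y j) (Y 0) μ μ) (a : ℕ) :
    μ.map (fun ω j => Y (a + j) ω) = Measure.infinitePi fun _ => μ.map (Y 0) := by
  rw [(hindep.precomp (add_right_injective a)).map_fun_eq_infinitePi_map fun j => hmeas _]
  simp_rw [(hident _).map_eq]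

lemma measure_renewalEvent_shift (hmeas : ∀ j, Measurable (Y j)) (hindep : iIndepFun Y μ)
    (hident : ∀ j, IdentDistrib (Y j) (Y 0) μ μ) (a b d : ℕ) :
    μ (renewalEvent Y a d) = μ (renewalEvent Y b d) := by
  have hpre : ∀ a, renewalEvent Y a d =
      (fun ω j => Y (a + j) ω) ⁻¹' renewalEvent (fun j (y : ℕ → ℕ) => y j) 0 d := fun a => by
    ext ω; simp [renewalEvent, shiftedSum]
  have hmeas_set : MeasurableSet (renewalEvent (fun j (y : ℕ → ℕ) => y j) 0 d) :=
    measurableSet_renewalEvent (fun j => measurable_pi_apply _) d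
  simp only [hpre, ← Measure.map_apply (measurable_pi_lambda _ fun j => hmeas _) hmeas_set,
    map_shift_eq_infinitePi hmeas hindep hident]

lemma sum_range_tsub_eq_self {i : ℕ → ℕ} {n : ℕ} (hi0 : i 0 = 0)
    (hmono : ∀ k < n, i k ≤ i (k + 1)) : ∀ k ≤ n, ∑ j ∈ range k, (i (j + 1) - i j) = i k
  | 0, _ => by simp [hi0]
  | k + 1, hk => by
    rw [sum_range_succ, sum_range_tsub_eq_self hi0 hmono k (by omega)]
    have := hmono k (by omega)
    omega

theorem measure_biInter_renewalEvent_sum (hmeas : ∀ j, Measurable (Y j))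
    (hpos : ∀ j ω, 0 < Y j ω) (hindep : iIndepFun Y μ)
    (hident : ∀ j, IdentDistrib (Y j) (Y 0) μ μ) (e : ℕ → ℕ) (n a : ℕ) :
    μ (⋂ k ∈ range n, renewalEvent Y a (∑ j ∈ range (k + 1), e j)) =
      ∏ k ∈ range n, μ (renewalEvent Y 0 (e k)) := by
  induction n generalizing e a with
  | zero => simp [hindep.isProbabilityMeasure]
  | succ n ih =>
    have hsplit : ⋂ k ∈ range (n + 1), renewalEvent Y a (∑ j ∈ range (k + 1), e j) =
        renewalEvent Y a (e 0) ∩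
          ⋂ k ∈ range n, renewalEvent Y a (e 0 + ∑ j ∈ range (k + 1), e (j + 1)) := by
      ext ω
      simp only [Set.mem_inter_iff, Set.mem_iInter, mem_range, Nat.forall_lt_succ_left',
        sum_range_succ' _ (_ + 1), zero_add, sum_range_one, add_comm (e 0)]
    have hfuture : ∀ m, MeasurableSet[⨆ j ∈ Set.Ici (a + m),
        MeasurableSpace.comap (Y j) inferInstance]
        (⋂ k ∈ range n, renewalEvent Y (a + m) (∑ j ∈ range (k + 1), e (j + 1))) := fun m =>
      .biInter (Set.to_countable _) fun k _ => measurableSet_renewalEvent (fun j => .of_comap_le <|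
        le_biSup (fun j => MeasurableSpace.comap (Y j) inferInstance) (by simp)) _
    rw [hsplit, renewalEvent_inter_biInter, measure_iUnion]
    · calc ∑' m, μ (shiftedSum Y a m ⁻¹' {e 0} ∩
            ⋂ k ∈ range n, renewalEvent Y (a + m) (∑ j ∈ range (k + 1), e (j + 1)))
          = ∑' m, μ (shiftedSum Y a m ⁻¹' {e 0}) *
              ∏ k ∈ range n, μ (renewalEvent Y 0 (e (k + 1))) :=
            tsum_congr fun m => by
              rw [measure_shiftedSum_preimage_inter hmeas hindep a m _ (hfuture m), ih]
        _ = μ (renewalEvent Y 0 (e 0)) * ∏ k ∈ range n, μ (renewalEvent Y 0 (e (k + 1))) := by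
          rw [ENNReal.tsum_mul_right, ← measure_renewalEvent_eq_tsum hmeas hpos,
            measure_renewalEvent_shift hmeas hindep hident a 0]
        _ = ∏ k ∈ range (n + 1), μ (renewalEvent Y 0 (e k)) := by rw [prod_range_succ', mul_comm]
    · exact fun m l hml => (pairwise_disjoint_shiftedSum_preimage hpos a _ hml).mono
        Set.inter_subset_left Set.inter_subset_left
    · exact fun m => (measurable_shiftedSum (fun _ _ => hmeas _) (measurableSet_singleton _)).inter
        (.biInter (Set.to_countable _) fun _ _ => measurableSet_renewalEvent (fun _ => hmeas _) _)

end Renewal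

open Renewal in
theorem renewal_intersection_product_general
    {Ω : Type*} [MeasureSpace Ω]
    (Y : ℕ → Ω → ℕ)
    (hmeas : ∀ j, Measurable (Y j))
    (hpos : ∀ j ω, 0 < Y j ω)
    (hindep : iIndepFun Y ℙ)
    (hident : ∀ j, IdentDistrib (Y j) (Y 0) ℙ ℙ)
    (S : ℕ → Ω → ℕ) (hS : ∀ m ω, S m ω = ∑ j ∈ Finset.range m, Y j ω)
    (E : ℕ → Set Ω) (hE : ∀ i, E i = {ω | ∃ m, S m ω = i})
    (n : ℕ) (i : ℕ → ℕ) (hi0 : i 0 = 0)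
    (hmono : ∀ k < n, i k < i (k + 1)) :
    ℙ (⋂ k ∈ Finset.Icc 1 n, E (i k)) = ∏ k ∈ Finset.Icc 1 n, ℙ (E (i k - i (k - 1))) := by
  have hE_renewal : E = renewalEvent Y 0 := funext fun d => by
    ext ω; simp [hE, hS, renewalEvent, shiftedSum]
  have hIcc : Icc 1 n = (range n).image (· + 1) := by
    rw [range_eq_Ico, image_add_right_Ico, Ico_add_one_right_eq_Icc]
  have hsum : ∀ k ∈ range n, i (k + 1) = ∑ j ∈ range (k + 1), (i (j + 1) - i j) := fun k hk =>
    (sum_range_tsub_eq_self hi0 (fun j hj => (hmono j hj).le) (k + 1) (mem_range.1 hk)).symm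
  subst hE_renewal
  rw [hIcc, prod_image (add_left_injective 1).injOn, set_biInter_finset_image]
  simp only [Nat.add_sub_cancel]
  rw [Set.iInter₂_congr fun k hk => by rw [hsum k hk]]
  exact measure_biInter_renewalEvent_sum hmeas hpos hindep hident _ n 0

/-- **Renewal intersection identity.** For i.i.d. positive-integer random variables
`Y_j`, partial sums `S_m = Y_1 + ⋯ + Y_m`, and renewal events
`E_i = {∃ m, S_m = i}`, for any integers `0 = i_0 < i_1 < ⋯ < i_n` we have
`ℙ(E_{i_1} ∩ ⋯ ∩ E_{i_n}) = ∏_{k=1}^n ℙ(E_{i_k - i_{k-1}})`. -/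
theorem renewal_intersection_product
    {Ω : Type*} [MeasureSpace Ω] [IsProbabilityMeasure (ℙ : Measure Ω)]
    (Y : ℕ → Ω → ℕ)
    (hmeas : ∀ j, Measurable (Y j))
    (hpos : ∀ j ω, 0 < Y j ω)
    (hindep : iIndepFun Y ℙ)
    (hident : ∀ j, IdentDistrib (Y j) (Y 0) ℙ ℙ)
    (S : ℕ → Ω → ℕ) (hS : ∀ m ω, S m ω = ∑ j ∈ Finset.range m, Y j ω)
    (E : ℕ → Set Ω) (hE : ∀ i, E i = {ω | ∃ m, S m ω = i})
    (n : ℕ) (i : ℕ → ℕ) (hi0 : i 0 = 0)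
    (hmono : ∀ k < n, i k < i (k + 1)) :
    ℙ (⋂ k ∈ Finset.Icc 1 n, E (i k)) = ∏ k ∈ Finset.Icc 1 n, ℙ (E (i k - i (k - 1))) :=
  renewal_intersection_product_general Y hmeas hpos hindep hident S hS E hE n i hi0 hmono
end

section
/- Let (Y_j) be i.i.d. positive integer-valued random variables, S_m = Y_1 + ... + Y_m, M_n = sup{m : S_m ≤ n}, and suppose P(Y_1 ≥ n) ≥ n^{-(1-α)+o(1)} for some α ∈ (0,1). Then for every k ∈ ℕ, E(M_n^k) ≤ n^{k(1-α)+o(1)} as n → ∞. -/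
/-!
Since every `Y_j` is positive, `M_n ≥ m` forces `Y_0, …, Y_{m-1} ≤ n`, so by independence
`P(M_n ≥ m) ≤ q ^ m` with `q = P(Y_0 ≤ n) = 1 - p`: the renewal count is dominated by a
geometric variable of parameter `p = P(Y_0 > n)`. Summing these tails against the increments
`(m + 1) ^ k - m ^ k` and comparing with the negative binomial series
`∑ (m + j).choose j * q ^ m = (1 - q)⁻¹ ^ (j + 1)` gives `E(M_n ^ k) ≤ (k! + 1) / p ^ k`,
and the tail hypothesis `p ≥ n ^ (-(1 - α) - δ)` turns this into the claimed growth rate.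
-/

open MeasureTheory ProbabilityTheory Filter Finset
open scoped Nat

theorem pow_succ_sub_pow_le_factorial_mul_choose (m j : ℕ) :
    ((m : ℝ) + 1) ^ (j + 1) - (m : ℝ) ^ (j + 1) ≤ (j + 1)! * (m + j).choose j := by
  have hdiff : ((m : ℝ) + 1) ^ (j + 1) - (m : ℝ) ^ (j + 1) ≤ (j + 1) * ((m : ℝ) + 1) ^ j := by
    have := abs_pow_sub_pow_le ((m : ℝ) + 1) m (j + 1)
    simp only [add_sub_cancel_left, abs_one, one_mul, Nat.add_sub_cancel] at this
    rw [abs_of_nonneg (by positivity : (0 : ℝ) ≤ m + 1),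
      abs_of_nonneg (Nat.cast_nonneg (α := ℝ) m), max_eq_left (by linarith), Nat.cast_succ] at this
    exact (le_abs_self _).trans this
  have hpow : ((m : ℝ) + 1) ^ j ≤ j ! * (m + j).choose j := by
    have := Nat.pow_sub_le_descFactorial (m + j) j
    rw [Nat.descFactorial_eq_factorial_mul_choose, show m + j + 1 - j = m + 1 by omega] at this
    exact_mod_cast this
  calc _ ≤ (j + 1) * ((m : ℝ) + 1) ^ j := hdiff
    _ ≤ (j + 1) * (j ! * (m + j).choose j) := by gcongr
    _ = _ := by push_cast [Nat.factorial_succ]; ring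

theorem sum_range_pow_succ_sub_pow_mul_pow_le {q : ℝ} (hq0 : 0 ≤ q) (hq1 : q < 1) (k N : ℕ) :
    ∑ m ∈ range N, (((m : ℝ) + 1) ^ k - (m : ℝ) ^ k) * q ^ m ≤ k ! / (1 - q) ^ k := by
  rcases k with _ | j
  · simp
  have hsum := hasSum_choose_mul_geometric_of_norm_lt_one j (r := q)
    (by rwa [Real.norm_of_nonneg hq0])
  calc ∑ m ∈ range N, (((m : ℝ) + 1) ^ (j + 1) - (m : ℝ) ^ (j + 1)) * q ^ m
      ≤ ∑ m ∈ range N, (j + 1)! * ((m + j).choose j * q ^ m) := by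
        refine sum_le_sum fun m _ => ?_
        rw [← mul_assoc]
        exact mul_le_mul_of_nonneg_right (pow_succ_sub_pow_le_factorial_mul_choose m j)
          (by positivity)
    _ ≤ (j + 1)! * (1 / (1 - q) ^ (j + 1)) := by
        rw [← mul_sum]
        gcongr
        exact (hsum.summable.sum_le_tsum _ fun m _ => by positivity).trans hsum.tsum_eq.le
    _ = _ := by ring

theorem apply_eq_add_sum_range_ite_sub (f : ℕ → ℝ) {x n : ℕ} (hx : x ≤ n) :
    f x = f 0 + ∑ m ∈ range n, if m < x then f (m + 1) - f m else 0 := by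
  rw [sum_ite, sum_const_zero, add_zero]
  have : {m ∈ range n | m < x} = range x := by ext; simp; omega
  rw [this, sum_range_sub]; ring

theorem strictMono_sum_range_of_pos {a : ℕ → ℕ} (ha : ∀ j, 0 < a j) :
    StrictMono fun m => ∑ j ∈ range m, a j :=
  strictMono_nat_of_lt_succ fun m => by simpa [sum_range_succ] using ha m

noncomputable def renewalCount {Ω : Type*} (Y : ℕ → Ω → ℕ) (n : ℕ) (ω : Ω) : ℕ :=
  sSup {m | ∑ j ∈ range m, Y j ω ≤ n}

theorem le_renewalCount_iff {Ω : Type*} {Y : ℕ → Ω → ℕ} (hpos : ∀ j ω, 0 < Y j ω)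
    {n : ℕ} {ω : Ω} (m : ℕ) : m ≤ renewalCount Y n ω ↔ ∑ j ∈ range m, Y j ω ≤ n := by
  have hmono := strictMono_sum_range_of_pos (hpos · ω)
  have hbdd : BddAbove {m | ∑ j ∈ range m, Y j ω ≤ n} :=
    ⟨n, fun i hi => (hmono.id_le i).trans hi⟩
  exact ⟨fun hm => (hmono.monotone hm).trans (Nat.sSup_mem ⟨0, by simp⟩ hbdd),
    fun hm => le_csSup hbdd hm⟩

theorem renewalCount_le {Ω : Type*} {Y : ℕ → Ω → ℕ} (hpos : ∀ j ω, 0 < Y j ω) (n : ℕ) (ω : Ω) :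
    renewalCount Y n ω ≤ n :=
  ((strictMono_sum_range_of_pos (hpos · ω)).id_le _).trans
    ((le_renewalCount_iff hpos _).1 le_rfl)

section Probability

variable {Ω : Type*} [MeasurableSpace Ω] {μ : Measure Ω}

theorem integral_comp_eq_add_sum_range_mul_measureReal [IsProbabilityMeasure μ] {X : Ω → ℕ}
    (hX : Measurable X) {n : ℕ} (hXn : ∀ ω, X ω ≤ n) (f : ℕ → ℝ) :
    ∫ ω, f (X ω) ∂μ = f 0 + ∑ m ∈ range n, (f (m + 1) - f m) * μ.real {ω | m < X ω} := by
  have hset : ∀ m, MeasurableSet {ω | m < X ω} := fun m => hX measurableSet_Ioi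
  have hint : ∀ m, Integrable ({ω | m < X ω}.indicator fun _ => f (m + 1) - f m) μ :=
    fun m => (integrable_const _).indicator (hset m)
  calc ∫ ω, f (X ω) ∂μ
      = ∫ ω, f 0 + ∑ m ∈ range n, {ω | m < X ω}.indicator (fun _ => f (m + 1) - f m) ω ∂μ := by
        congr with ω
        simp only [Set.indicator_apply]
        exact apply_eq_add_sum_range_ite_sub f (hXn ω)
    _ = _ := by
        rw [integral_add (integrable_const _) (integrable_finsetSum _ fun m _ => hint m),
          integral_finsetSum _ fun m _ => hint m]
        simp [integral_indicator_const _ (hset _), mul_comm]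

theorem measureReal_sum_range_le_le_pow [IsFiniteMeasure μ] {Y : ℕ → Ω → ℕ}
    (hindep : iIndepFun Y μ) (hident : ∀ j, IdentDistrib (Y j) (Y 0) μ μ) (m n : ℕ) :
    μ.real {ω | ∑ j ∈ range m, Y j ω ≤ n} ≤ μ.real {ω | Y 0 ω ≤ n} ^ m := by
  have hsub : {ω | ∑ j ∈ range m, Y j ω ≤ n} ⊆ ⋂ j ∈ range m, Y j ⁻¹' Set.Iic n :=
    fun ω hω => Set.mem_iInter₂.2 fun j hj =>
      (single_le_sum (fun i _ => Nat.zero_le (Y i ω)) hj).trans hω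
  have hprod : μ (⋂ j ∈ range m, Y j ⁻¹' Set.Iic n) = μ {ω | Y 0 ω ≤ n} ^ m := by
    rw [hindep.meas_biInter fun j _ => ⟨Set.Iic n, measurableSet_Iic, rfl⟩,
      prod_congr rfl fun j _ => (hident j).measure_mem_eq measurableSet_Iic, prod_const,
      card_range]
    rfl
  calc μ.real {ω | ∑ j ∈ range m, Y j ω ≤ n} ≤ μ.real (⋂ j ∈ range m, Y j ⁻¹' Set.Iic n) :=
        measureReal_mono hsub
    _ = _ := by rw [measureReal_def, hprod, ENNReal.toReal_pow]; rfl

theorem measurable_renewalCount {Y : ℕ → Ω → ℕ} (hpos : ∀ j ω, 0 < Y j ω)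
    (hmeas : ∀ j, Measurable (Y j)) (n : ℕ) : Measurable (renewalCount Y n) :=
  measurable_of_Ici fun m => by
    have : renewalCount Y n ⁻¹' Set.Ici m = {ω | ∑ j ∈ range m, Y j ω ≤ n} := by
      ext ω; exact le_renewalCount_iff hpos m
    rw [this]
    exact (Finset.measurable_sum _ fun j _ => hmeas j) measurableSet_Iic

theorem integral_renewalCount_pow_le [IsProbabilityMeasure μ] {Y : ℕ → Ω → ℕ}
    (hpos : ∀ j ω, 0 < Y j ω) (hmeas : ∀ j, Measurable (Y j)) (hindep : iIndepFun Y μ)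
    (hident : ∀ j, IdentDistrib (Y j) (Y 0) μ μ) {n : ℕ} (hp : 0 < μ.real {ω | n < Y 0 ω})
    (k : ℕ) :
    ∫ ω, (renewalCount Y n ω : ℝ) ^ k ∂μ ≤ (k ! + 1) / μ.real {ω | n < Y 0 ω} ^ k := by
  set p := μ.real {ω | n < Y 0 ω}
  set q := μ.real {ω | Y 0 ω ≤ n}
  have hqp : q = 1 - p := by
    have : {ω | Y 0 ω ≤ n} = {ω | n < Y 0 ω}ᶜ := by ext; simp
    rw [show q = μ.real {ω | n < Y 0 ω}ᶜ by rw [← this],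
      measureReal_compl (measurableSet_lt measurable_const (hmeas 0)), probReal_univ]
  have hq0 : 0 ≤ q := measureReal_nonneg
  have hq1 : q ≤ 1 := by linarith
  have htail : ∀ m, μ.real {ω | m < renewalCount Y n ω} ≤ q ^ m := fun m => by
    have : {ω | m < renewalCount Y n ω} = {ω | ∑ j ∈ range (m + 1), Y j ω ≤ n} := by
      ext ω; exact le_renewalCount_iff hpos (m + 1)
    rw [this]
    exact (measureReal_sum_range_le_le_pow hindep hident (m + 1) n).trans
      (pow_le_pow_of_le_one hq0 hq1 m.le_succ)
  have hpk : 0 < p ^ k := pow_pos hp k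
  rw [integral_comp_eq_add_sum_range_mul_measureReal (measurable_renewalCount hpos hmeas n)
    (renewalCount_le hpos n) (fun m => (m : ℝ) ^ k)]
  push_cast
  calc (0 : ℝ) ^ k + ∑ m ∈ range n,
        (((m : ℝ) + 1) ^ k - (m : ℝ) ^ k) * μ.real {ω | m < renewalCount Y n ω}
      ≤ 1 + ∑ m ∈ range n, (((m : ℝ) + 1) ^ k - (m : ℝ) ^ k) * q ^ m := by
        gcongr with m
        · exact pow_le_one₀ le_rfl zero_le_one
        · exact sub_nonneg.2 (pow_le_pow_left₀ m.cast_nonneg (by linarith) k)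
        · exact htail m
    _ ≤ 1 + k ! / p ^ k := by
        gcongr
        simpa [hqp] using sum_range_pow_succ_sub_pow_mul_pow_le hq0 (by linarith) k n
    _ ≤ (k ! + 1) / p ^ k := by
        rw [add_div, add_comm]
        gcongr
        exact (one_le_div hpk).2 (pow_le_one₀ hp.le (by linarith [hq0]))

end Probability

theorem div_pow_le_mul_rpow_of_rpow_neg_le {x p e C : ℝ} (hx : 0 < x) (hC : 0 ≤ C)
    (h : x ^ (-e) ≤ p) (k : ℕ) : C / p ^ k ≤ C * x ^ (k * e) := by
  have hxe : 0 < x ^ (-e) := Real.rpow_pos_of_pos hx _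
  rw [div_eq_mul_inv, mul_comm (k : ℝ), Real.rpow_mul_natCast hx.le, ← inv_inv (x ^ e),
    ← Real.rpow_neg hx.le, inv_pow]
  gcongr

theorem eventually_mul_add_one_rpow_le {b c C : ℝ} (hb : 0 ≤ b) (hbc : b < c) (hC : 0 ≤ C) :
    ∀ᶠ n : ℕ in atTop, C * ((n : ℝ) + 1) ^ b ≤ (n : ℝ) ^ c := by
  have hgrowth : ∀ᶠ n : ℕ in atTop, C * 2 ^ b ≤ (n : ℝ) ^ (c - b) :=
    ((tendsto_rpow_atTop (sub_pos.2 hbc)).comp tendsto_natCast_atTop_atTop).eventually_ge_atTop _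
  filter_upwards [hgrowth, eventually_ge_atTop 1] with n hn hn1
  have hn1' : (1 : ℝ) ≤ n := by exact_mod_cast hn1
  calc C * ((n : ℝ) + 1) ^ b ≤ C * (2 * n) ^ b := by gcongr; linarith
    _ = C * 2 ^ b * (n : ℝ) ^ b := by rw [Real.mul_rpow zero_le_two (by linarith)]; ring
    _ ≤ (n : ℝ) ^ (c - b) * (n : ℝ) ^ b := by gcongr
    _ = (n : ℝ) ^ c := by rw [← Real.rpow_add (by linarith), sub_add_cancel]

/-- **Renewal moment bound.** For i.i.d. positive-integer random variables `Y_j`,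
partial sums `S_m`, and `M_n = sup{m : S_m ≤ n}`, if
`P(Y_1 ≥ n) ≥ n^{-(1-α)+o(1)}` for some `α ∈ (0,1)`, then for every `k ∈ ℕ`,
`E(M_n^k) ≤ n^{k(1-α)+o(1)}` as `n → ∞`. -/
theorem renewal_moment_bound
    {Ω : Type*} [MeasureSpace Ω] [IsProbabilityMeasure (ℙ : Measure Ω)]
    (Y : ℕ → Ω → ℕ)
    (hmeas : ∀ j, Measurable (Y j))
    (hpos : ∀ j ω, 0 < Y j ω)
    (hindep : iIndepFun Y ℙ)
    (hident : ∀ j, IdentDistrib (Y j) (Y 0) ℙ ℙ)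
    (S : ℕ → Ω → ℕ) (hS : ∀ m ω, S m ω = ∑ j ∈ Finset.range m, Y j ω)
    (M : ℕ → Ω → ℕ) (hM : ∀ n ω, M n ω = sSup {m | S m ω ≤ n})
    (α : ℝ) (hα : 0 < α ∧ α < 1)
    (htail : ∀ ε : ℝ, 0 < ε → ∃ N : ℕ, ∀ n : ℕ, N ≤ n →
      (n : ℝ) ^ (-(1 - α) - ε) ≤ (ℙ {ω | n ≤ Y 0 ω}).toReal) :
    ∀ k : ℕ, ∀ ε : ℝ, 0 < ε → ∃ N : ℕ, ∀ n : ℕ, N ≤ n →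
      ∫ ω, ((M n ω : ℝ)) ^ k ∂ℙ ≤ (n : ℝ) ^ ((k : ℝ) * (1 - α) + ε) := by
  intro k ε hε
  obtain rfl : M = renewalCount Y := by
    funext n ω; rw [hM, renewalCount]; simp only [hS]
  set δ := ε / (k + 1)
  have hδ : 0 < δ := by positivity
  have hkδ : k * δ < ε := by
    rw [mul_div_assoc', div_lt_iff₀ (by positivity)]; nlinarith
  obtain ⟨N₀, hN₀⟩ := htail δ hδ
  obtain ⟨N₁, hN₁⟩ := eventually_atTop.1 <| eventually_mul_add_one_rpow_le
    (b := k * (1 - α + δ)) (c := k * (1 - α) + ε) (by nlinarith) (by nlinarith)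
    (by positivity : (0 : ℝ) ≤ k ! + 1)
  refine ⟨max N₀ N₁, fun n hn => ?_⟩
  have hp : ((n : ℝ) + 1) ^ (-(1 - α + δ)) ≤ (ℙ : Measure Ω).real {ω | n < Y 0 ω} := by
    have h := hN₀ (n + 1) (by omega)
    rw [show -(1 - α) - δ = -(1 - α + δ) by ring] at h
    exact_mod_cast h
  calc ∫ ω, (renewalCount Y n ω : ℝ) ^ k ∂ℙ
      ≤ (k ! + 1) / (ℙ : Measure Ω).real {ω | n < Y 0 ω} ^ k :=
        integral_renewalCount_pow_le hpos hmeas hindep hident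
          ((Real.rpow_pos_of_pos (by positivity) _).trans_le hp) k
    _ ≤ (k ! + 1) * ((n : ℝ) + 1) ^ (k * (1 - α + δ)) :=
        div_pow_le_mul_rpow_of_rpow_neg_le (by positivity) (by positivity) hp k
    _ ≤ (n : ℝ) ^ (k * (1 - α) + ε) := hN₁ n (by omega)
end

section
/- Let (Y_j) be i.i.d. positive integer-valued random variables, S_m = Y_1 + ... + Y_m, M_n the number of m with S_m ≤ n, and suppose P(Y_1 ≥ n) ≥ n^{-(1-α)+o(1)} for some α ∈ (0,1). Then for each ν > 1-α, the probability that there exists i ≥ n with M_i ≥ i^ν decays faster than every power of n as n → ∞. -/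
/-!
If `M i ≥ k := ⌈i ^ ν⌉₊`, the first `k` gaps `Y 0, …, Y (k - 1)` are all at most `i`; by
independence this has probability `(1 - p)^k ≤ exp (-k p)` with `p = P(Y 0 > i)`. The tail
hypothesis makes `k p` at least a constant times `i ^ ε` for some `ε > 0`, so the probability is
`O(i ^ (-(s + 2)))` for every `s`, and a union bound over `i ≥ n` gives `O(n ^ (-s))`.
-/

open MeasureTheory ProbabilityTheory Filter Finset Real

/-- No boundedness is needed: `sSup` of an unbounded set of naturals is `0`. -/
theorem le_of_lt_of_le_sSup_sum_range_le {y : ℕ → ℕ} {n k j : ℕ}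
    (hk : k ≤ sSup {m | ∑ i ∈ range m, y i ≤ n}) (hj : j < k) : y j ≤ n := by
  obtain ⟨m, hm, hjm⟩ := exists_lt_of_lt_csSup' (hj.trans_le hk)
  exact (single_le_sum (fun _ _ ↦ Nat.zero_le _) (mem_range.2 hjm)).trans hm

namespace Real

theorem one_sub_pow_le_exp_neg_mul {p : ℝ} (hp : p ≤ 1) (k : ℕ) :
    (1 - p) ^ k ≤ exp (-(k * p)) := by
  calc (1 - p) ^ k ≤ exp (-p) ^ k := pow_le_pow_left₀ (sub_nonneg.2 hp) (one_sub_le_exp_neg p) k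
    _ = exp (-(k * p)) := by rw [← exp_nat_mul, mul_neg]

theorem exp_neg_le_factorial_div_pow {y : ℝ} (hy : 0 < y) (r : ℕ) :
    exp (-y) ≤ r.factorial / y ^ r := by
  rw [exp_neg, ← inv_div]
  exact inv_anti₀ (by positivity) (pow_div_factorial_le_exp y hy.le r)

theorem exists_exp_neg_mul_rpow_le {c ε : ℝ} (hc : 0 < c) (hε : 0 < ε) (t : ℝ) :
    ∃ K, ∀ x : ℝ, 1 ≤ x → exp (-(c * x ^ ε)) ≤ K * x ^ (-t) := by
  set r := ⌈t / ε⌉₊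
  have hr : t ≤ ε * r := by rw [mul_comm, ← div_le_iff₀ hε]; exact Nat.le_ceil _
  refine ⟨r.factorial / c ^ r, fun x hx ↦ ?_⟩
  have hx0 : 0 < x := one_pos.trans_le hx
  calc exp (-(c * x ^ ε)) ≤ r.factorial / (c * x ^ ε) ^ r :=
        exp_neg_le_factorial_div_pow (by positivity) r
    _ = r.factorial / c ^ r * x ^ (-(ε * r)) := by
        rw [mul_pow, ← rpow_natCast (x ^ ε), ← rpow_mul hx0.le, rpow_neg hx0.le]
        field_simp
    _ ≤ r.factorial / c ^ r * x ^ (-t) := by gcongr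

theorem two_rpow_mul_rpow_le_add_one_rpow {γ x : ℝ} (hγ : γ ≤ 0) (hx : 1 ≤ x) :
    2 ^ γ * x ^ γ ≤ (x + 1) ^ γ := by
  rw [← mul_rpow zero_le_two (by linarith)]
  exact rpow_le_rpow_of_nonpos (by linarith) (by linarith) hγ

theorem rpow_neg_add_le_mul {x a b m n : ℝ} (ha : 0 ≤ a) (hb : 0 ≤ b) (hm : 0 < m) (hn : 0 < n)
    (hmx : m ≤ x) (hnx : n ≤ x) : x ^ (-(a + b)) ≤ m ^ (-a) * n ^ (-b) := by
  rw [neg_add, rpow_add (hm.trans_le hmx)]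
  exact mul_le_mul (rpow_le_rpow_of_nonpos hm hmx (by linarith))
    (rpow_le_rpow_of_nonpos hn hnx (by linarith)) (rpow_nonneg (hn.le.trans hnx) _) (by positivity)

end Real

theorem exists_forall_le_mul_rpow_neg_of_eventually {f : ℕ → ℝ} {C s : ℝ} (hs : 0 ≤ s)
    (hf : ∀ n, f n ≤ 1) (h : ∀ᶠ n in atTop, f n ≤ C * (n : ℝ) ^ (-s)) :
    ∃ C', ∀ n : ℕ, 1 ≤ n → f n ≤ C' * (n : ℝ) ^ (-s) := by
  obtain ⟨N, hN⟩ := eventually_atTop.1 h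
  refine ⟨max C ((N : ℝ) ^ s), fun n hn ↦ ?_⟩
  have hn0 : (0 : ℝ) < n := by exact_mod_cast hn
  rcases le_or_gt N n with hNn | hnN
  · exact (hN n hNn).trans (by gcongr; exact le_max_left _ _)
  · have hN0 : (0 : ℝ) < N := hn0.trans (by exact_mod_cast hnN)
    calc f n ≤ (N : ℝ) ^ s * (N : ℝ) ^ (-s) := by
          rw [← rpow_add hN0, add_neg_cancel, rpow_zero]; exact hf n
      _ ≤ (N : ℝ) ^ s * (n : ℝ) ^ (-s) := mul_le_mul_of_nonneg_left
          (rpow_le_rpow_of_nonpos hn0 (Nat.cast_le.2 hnN.le) (by linarith)) (by positivity)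
      _ ≤ max C ((N : ℝ) ^ s) * (n : ℝ) ^ (-s) := by gcongr; exact le_max_right _ _

section
variable {Ω : Type*} [MeasurableSpace Ω] {μ : Measure Ω}

theorem measureReal_iUnion_le_tsum [IsFiniteMeasure μ] {F : ℕ → Set Ω} {b : ℕ → ℝ}
    (hb : Summable b) (hF : ∀ j, μ.real (F j) ≤ b j) : μ.real (⋃ j, F j) ≤ ∑' j, b j := by
  have hb0 : ∀ j, 0 ≤ b j := fun j ↦ measureReal_nonneg.trans (hF j)
  refine ENNReal.toReal_le_of_le_ofReal (tsum_nonneg hb0) ?_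
  calc μ (⋃ j, F j) ≤ ∑' j, μ (F j) := measure_iUnion_le F
    _ ≤ ∑' j, ENNReal.ofReal (b j) := ENNReal.tsum_le_tsum fun j ↦
        (ENNReal.le_ofReal_iff_toReal_le (measure_ne_top μ _) (hb0 j)).2 (hF j)
    _ = ENNReal.ofReal (∑' j, b j) := (ENNReal.ofReal_tsum_of_nonneg hb0 hb).symm

theorem eventually_measureReal_exists_ge_le [IsFiniteMeasure μ] {E : ℕ → Set Ω} {K s : ℝ}
    (hs : 0 ≤ s) (hE : ∀ᶠ i in atTop, μ.real (E i) ≤ K * (i : ℝ) ^ (-(s + 2))) :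
    ∀ᶠ n in atTop, μ.real {ω | ∃ i, n ≤ i ∧ ω ∈ E i} ≤
      K * (∑' j : ℕ, ((j : ℝ) + 1) ^ (-2 : ℝ)) * (n : ℝ) ^ (-s) := by
  obtain ⟨N, hN⟩ := eventually_atTop.1 hE
  have hK : 0 ≤ K := nonneg_of_mul_nonneg_left (measureReal_nonneg.trans (hN (N + 1) N.le_succ))
    (by positivity)
  filter_upwards [eventually_ge_atTop (max N 1)] with n hn
  have hn1 : (1 : ℝ) ≤ n := by exact_mod_cast (le_max_right N 1).trans hn
  have hsub : {ω | ∃ i, n ≤ i ∧ ω ∈ E i} ⊆ ⋃ j, E (j + n) := fun ω ⟨i, hni, hi⟩ ↦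
    Set.mem_iUnion.2 ⟨i - n, by rwa [Nat.sub_add_cancel hni]⟩
  have hsum : Summable fun j : ℕ ↦ ((j : ℝ) + 1) ^ (-2 : ℝ) := by
    exact_mod_cast (summable_nat_add_iff 1).2 (summable_nat_rpow.2 (by norm_num : (-2 : ℝ) < -1))
  calc μ.real {ω | ∃ i, n ≤ i ∧ ω ∈ E i} ≤ μ.real (⋃ j, E (j + n)) := measureReal_mono hsub
    _ ≤ ∑' j : ℕ, K * (n : ℝ) ^ (-s) * ((j : ℝ) + 1) ^ (-2 : ℝ) := by
        refine measureReal_iUnion_le_tsum (hsum.mul_left _) fun j ↦ ?_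
        calc μ.real (E (j + n)) ≤ K * ((j + n : ℕ) : ℝ) ^ (-(s + 2)) :=
              hN _ ((le_max_left N 1).trans (hn.trans (Nat.le_add_left n j)))
          _ ≤ K * ((n : ℝ) ^ (-s) * ((j : ℝ) + 1) ^ (-2 : ℝ)) := by
              gcongr
              push_cast
              exact rpow_neg_add_le_mul hs zero_le_two (by linarith) (by positivity)
                (by linarith [(j.cast_nonneg : (0 : ℝ) ≤ j)]) (by linarith)
          _ = K * (n : ℝ) ^ (-s) * ((j : ℝ) + 1) ^ (-2 : ℝ) := by ring
    _ = K * (∑' j : ℕ, ((j : ℝ) + 1) ^ (-2 : ℝ)) * (n : ℝ) ^ (-s) := by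
        rw [tsum_mul_left]; ring

theorem ProbabilityTheory.iIndepFun.measure_forall_lt_mem_eq_pow {β : Type*} [MeasurableSpace β]
    {Y : ℕ → Ω → β}
    (hindep : iIndepFun Y μ) (hident : ∀ j, IdentDistrib (Y j) (Y 0) μ μ) {B : Set β}
    (hB : MeasurableSet B) (k : ℕ) : μ {ω | ∀ j < k, Y j ω ∈ B} = μ (Y 0 ⁻¹' B) ^ k := by
  have hinter : {ω | ∀ j < k, Y j ω ∈ B} = ⋂ j ∈ range k, Y j ⁻¹' B := by ext; simp
  rw [hinter, hindep.meas_biInter fun j _ ↦ ⟨B, hB, rfl⟩,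
    prod_congr rfl fun j _ ↦ (hident j).measure_mem_eq hB, prod_const, card_range]

theorem measureReal_le_sSup_sum_range_le_le_exp [IsProbabilityMeasure μ] {Y : ℕ → Ω → ℕ}
    (hindep : iIndepFun Y μ) (hident : ∀ j, IdentDistrib (Y j) (Y 0) μ μ) (i k : ℕ) :
    μ.real {ω | k ≤ sSup {m | ∑ j ∈ range m, Y j ω ≤ i}} ≤
      exp (-(k * μ.real {ω | i < Y 0 ω})) := by
  have hcompl : μ.real (Y 0 ⁻¹' Set.Iic i) = 1 - μ.real {ω | i < Y 0 ω} := by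
    change _ = 1 - μ.real (Y 0 ⁻¹' Set.Ioi i)
    rw [← probReal_compl_eq_one_sub₀
      ((hident 0).aemeasurable_fst.nullMeasurableSet_preimage measurableSet_Ioi),
      ← Set.preimage_compl, Set.compl_Ioi]
  calc μ.real {ω | k ≤ sSup {m | ∑ j ∈ range m, Y j ω ≤ i}}
      ≤ μ.real {ω | ∀ j < k, Y j ω ∈ Set.Iic i} :=
        measureReal_mono fun ω hω j hj ↦ le_of_lt_of_le_sSup_sum_range_le hω hj
    _ = (1 - μ.real {ω | i < Y 0 ω}) ^ k := by
        rw [measureReal_def, hindep.measure_forall_lt_mem_eq_pow hident measurableSet_Iic,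
          ENNReal.toReal_pow, ← measureReal_def, hcompl]
    _ ≤ exp (-(k * μ.real {ω | i < Y 0 ω})) := one_sub_pow_le_exp_neg_mul measureReal_le_one k

end

theorem renewal_count_superpolynomial_decay_general
    {Ω : Type*} [MeasureSpace Ω] [IsProbabilityMeasure (ℙ : Measure Ω)]
    (Y : ℕ → Ω → ℕ)
    (hindep : iIndepFun Y ℙ)
    (hident : ∀ j, IdentDistrib (Y j) (Y 0) ℙ ℙ)
    (S : ℕ → Ω → ℕ) (hS : ∀ m ω, S m ω = ∑ j ∈ Finset.range m, Y j ω)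
    (M : ℕ → Ω → ℕ) (hM : ∀ n ω, M n ω = sSup {m | S m ω ≤ n})
    (α : ℝ) (hα : 0 < α ∧ α < 1)
    (htail : ∀ ε : ℝ, 0 < ε → ∃ N : ℕ, ∀ n : ℕ, N ≤ n →
      (n : ℝ) ^ (-(1 - α) - ε) ≤ (ℙ {ω | n ≤ Y 0 ω}).toReal) :
    ∀ ν : ℝ, 1 - α < ν → ∀ s : ℝ, 0 < s → ∃ C : ℝ, ∀ n : ℕ, 1 ≤ n →
      (ℙ {ω | ∃ i : ℕ, n ≤ i ∧ (i : ℝ) ^ ν ≤ (M i ω : ℝ)}).toReal ≤ C * (n : ℝ) ^ (-s) := by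
  intro ν hν s hs
  set ε := (ν - (1 - α)) / 2 with hε_def
  have hε : 0 < ε := by rw [hε_def]; linarith
  set γ := -(1 - α) - ε with hγ_def
  have hγ : γ ≤ 0 := by rw [hγ_def]; linarith [hα.2]
  obtain ⟨N, hN⟩ := htail ε hε
  obtain ⟨K, hK⟩ := exists_exp_neg_mul_rpow_le (c := 2 ^ γ) (by positivity) hε (s + 2)
  refine exists_forall_le_mul_rpow_neg_of_eventually hs.le (fun n ↦ measureReal_le_one)
    (eventually_measureReal_exists_ge_le (E := fun i ↦ {ω | (i : ℝ) ^ ν ≤ M i ω}) (K := K) hs.le ?_)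
  filter_upwards [eventually_ge_atTop (max N 1)] with i hi
  have hi1 : (1 : ℝ) ≤ i := by exact_mod_cast (le_max_right N 1).trans hi
  set p := (ℙ : Measure Ω).real {ω | i < Y 0 ω}
  have hp : 2 ^ γ * (i : ℝ) ^ γ ≤ p := by
    refine (two_rpow_mul_rpow_le_add_one_rpow hγ hi1).trans ?_
    exact_mod_cast hN (i + 1) (by omega)
  have hkp : 2 ^ γ * (i : ℝ) ^ ε ≤ ⌈(i : ℝ) ^ ν⌉₊ * p := calc
    2 ^ γ * (i : ℝ) ^ ε = (i : ℝ) ^ ν * (2 ^ γ * (i : ℝ) ^ γ) := by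
      rw [show ε = ν + γ by rw [hγ_def, hε_def]; ring, rpow_add (by linarith)]; ring
    _ ≤ _ := mul_le_mul (Nat.le_ceil _) hp (by positivity) (by positivity)
  calc (ℙ : Measure Ω).real {ω | (i : ℝ) ^ ν ≤ M i ω}
      ≤ (ℙ : Measure Ω).real {ω | ⌈(i : ℝ) ^ ν⌉₊ ≤ sSup {m | ∑ j ∈ range m, Y j ω ≤ i}} :=
        measureReal_mono fun ω (hω : (i : ℝ) ^ ν ≤ M i ω) ↦ show _ ≤ _ by
          simpa only [hM, hS] using Nat.ceil_le.2 hω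
    _ ≤ exp (-(⌈(i : ℝ) ^ ν⌉₊ * p)) :=
        measureReal_le_sSup_sum_range_le_le_exp hindep hident i _
    _ ≤ exp (-(2 ^ γ * (i : ℝ) ^ ε)) := by gcongr
    _ ≤ K * (i : ℝ) ^ (-(s + 2)) := hK i hi1

/-- **Superpolynomial decay for renewal counts.** For i.i.d. positive-integer random
variables `Y_j`, partial sums `S_m`, and `M_n = sup{m : S_m ≤ n}` the number of
renewal times in `[1,n]`, if `P(Y_1 ≥ n) ≥ n^{-(1-α)+o(1)}` for some `α ∈ (0,1)`,
then for each `ν > 1-α`, the probability that there exists `i ≥ n` with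
`M_i ≥ i^ν` decays faster than every power of `n`. -/
theorem renewal_count_superpolynomial_decay
    {Ω : Type*} [MeasureSpace Ω] [IsProbabilityMeasure (ℙ : Measure Ω)]
    (Y : ℕ → Ω → ℕ)
    (hmeas : ∀ j, Measurable (Y j))
    (hpos : ∀ j ω, 0 < Y j ω)
    (hindep : iIndepFun Y ℙ)
    (hident : ∀ j, IdentDistrib (Y j) (Y 0) ℙ ℙ)
    (S : ℕ → Ω → ℕ) (hS : ∀ m ω, S m ω = ∑ j ∈ Finset.range m, Y j ω)
    (M : ℕ → Ω → ℕ) (hM : ∀ n ω, M n ω = sSup {m | S m ω ≤ n})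
    (α : ℝ) (hα : 0 < α ∧ α < 1)
    (htail : ∀ ε : ℝ, 0 < ε → ∃ N : ℕ, ∀ n : ℕ, N ≤ n →
      (n : ℝ) ^ (-(1 - α) - ε) ≤ (ℙ {ω | n ≤ Y 0 ω}).toReal) :
    ∀ ν : ℝ, 1 - α < ν → ∀ s : ℝ, 0 < s → ∃ C : ℝ, ∀ n : ℕ, 1 ≤ n →
      (ℙ {ω | ∃ i : ℕ, n ≤ i ∧ (i : ℝ) ^ ν ≤ (M i ω : ℝ)}).toReal ≤ C * (n : ℝ) ^ (-s) :=
  renewal_count_superpolynomial_decay_general Y hindep hident S hS M hM α hα htail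
end

section
/- With κ ∈ (4,8) and p = √(2+2cos(8π/κ)) / (2 + √(2+2cos(8π/κ))), the cone exponents satisfy μ := π/(2(π - arctan(√(1-2p)/p))) = κ/8 and μ' := π/(2(π + arctan(√(1-2p)/p))) = κ/(4(κ-2)). -/
open Real

/-- **Evaluation of the cone exponents.** For `κ ∈ (4,8)` and
`p = √(2+2cos(8π/κ)) / (2 + √(2+2cos(8π/κ)))`, the cone exponents satisfy
`μ = π/(2(π - arctan(√(1-2p)/p))) = κ/8` and
`μ' = π/(2(π + arctan(√(1-2p)/p))) = κ/(4(κ-2))`. -/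
theorem cone_exponents_eval (κ : ℝ) (hκ : 4 < κ ∧ κ < 8)
    (p : ℝ)
    (hp : p = Real.sqrt (2 + 2 * Real.cos (8 * π / κ)) /
        (2 + Real.sqrt (2 + 2 * Real.cos (8 * π / κ)))) :
    π / (2 * (π - Real.arctan (Real.sqrt (1 - 2 * p) / p))) = κ / 8 ∧
    π / (2 * (π + Real.arctan (Real.sqrt (1 - 2 * p) / p))) = κ / (4 * (κ - 2)) := by
  obtain ⟨hκ4, hκ8⟩ := hκ
  have hπ : (0:ℝ) < π := Real.pi_pos
  have hκ0 : (0:ℝ) < κ := by linarith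
  set a := 4 * π / κ with ha
  have ha1 : π / 2 < a := by
    rw [ha, div_lt_div_iff₀ (by norm_num) hκ0]; nlinarith
  have ha2 : a < π := by
    rw [ha, div_lt_iff₀ hκ0]; nlinarith
  have ha0 : 0 < a := by positivity
  have hca : Real.cos a < 0 :=
    Real.cos_neg_of_pi_div_two_lt_of_lt ha1 (by linarith)
  have hsa : 0 < Real.sin a := Real.sin_pos_of_pos_of_lt_pi ha0 ha2
  set c := Real.cos a with hc
  have hc1 : -1 ≤ c := Real.neg_one_le_cos a
  have hcos2 : Real.cos (8 * π / κ) = 2 * c ^ 2 - 1 := by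
    have : 8 * π / κ = 2 * a := by rw [ha]; ring
    rw [this, Real.cos_two_mul]
  have hs : Real.sqrt (2 + 2 * Real.cos (8 * π / κ)) = -2 * c := by
    rw [hcos2, show 2 + 2 * (2 * c ^ 2 - 1) = (-2 * c) ^ 2 by ring,
      Real.sqrt_sq (by linarith)]
  have hden : (0:ℝ) < 1 - c := by linarith
  have hpe : p = -c / (1 - c) := by
    rw [hp, hs]; rw [div_eq_div_iff (by linarith) (by linarith)]; ring
  have hp0 : 0 < p := by
    rw [hpe]; exact div_pos (by linarith) hden
  have h12p : 1 - 2 * p = (1 + c) / (1 - c) := by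
    rw [hpe]; field_simp; ring
  have h12p0 : 0 ≤ 1 - 2 * p := by
    rw [h12p]; exact div_nonneg (by linarith) hden.le
  have hsin2 : Real.sin a ^ 2 = (1 + c) * (1 - c) := by
    have := Real.sin_sq_add_cos_sq a; nlinarith
  have hratio : Real.sqrt (1 - 2 * p) / p = Real.tan (π - a) := by
    have htan : Real.tan (π - a) = Real.sin a / (-c) := by
      rw [Real.tan_eq_sin_div_cos, Real.sin_pi_sub, Real.cos_pi_sub]
    have h1 : Real.sqrt (1 - 2 * p) = Real.sin a / (1 - c) := by
      rw [h12p]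
      rw [show (1 + c) / (1 - c) = (Real.sin a / (1 - c)) ^ 2 by
        rw [div_pow, hsin2]; rw [div_eq_div_iff (by linarith) (by positivity)]; ring]
      exact Real.sqrt_sq (by positivity)
    rw [h1, hpe, htan]
    have hc0 : c ≠ 0 := ne_of_lt hca
    field_simp
  have harc : Real.arctan (Real.sqrt (1 - 2 * p) / p) = π - a := by
    rw [hratio, Real.arctan_tan (by linarith) (by linarith)]
  rw [harc]
  constructor
  · rw [show π - (π - a) = a by ring, ha]
    field_simp; ring
  · rw [show π + (π - a) = 2 * π - a by ring, ha]
    rw [div_eq_div_iff (by nlinarith [mul_pos hπ hκ0]) (by nlinarith)]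
    field_simp; ring
end

section
/- For the i.i.d. word X with parameter p ∈ (0,1/2), let I_1 be the smallest i ∈ ℕ for which X(1,i) contains an order, and inductively let I_m be the smallest i ≥ I_{m-1}+1 for which X(I_{m-1}+1, i) contains an order. Call i ∈ ℕ ancestor-free if X(k,i) contains an order for every k ∈ {1,...,i}. Then I_m is exactly the m-th smallest ancestor-free time in ℕ. -/
/-- The five symbols of Sheffield's inventory accumulation model: hamburger `hb`,
cheeseburger `cb`, hamburger order `ho`, cheeseburger order `co`, flexible order `fo`. -/
inductive BSym : Type
  | hb | cb | ho | co | fo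
  deriving DecidableEq

instance : MeasurableSpace BSym := ⊤

/-- Remove the rightmost element satisfying `P` from a list (if any). -/
def removeRightmost (P : BSym → Bool) : List BSym → Option (List BSym)
  | [] => none
  | a :: l =>
    match removeRightmost P l with
    | some l' => some (a :: l')
    | none => if P a then some l else none

/-- One step of the word reduction: the state is the pair (orders, burgers) of the
reduced word so far (all burgers to the right of all orders).  A burger is appended
to the burger stack; an order consumes the freshest matching burger (flexible orders
consume the freshest burger of either type), or is appended to the order list if no
matching burger is present.  This implements the relations
`Cc = Hh = CF = HF = ∅`, `Ch = hC`, `Hc = cH`. -/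
def burgerStep : List BSym × List BSym → BSym → List BSym × List BSym
  | (O, B), BSym.hb => (O, B ++ [BSym.hb])
  | (O, B), BSym.cb => (O, B ++ [BSym.cb])
  | (O, B), BSym.ho =>
    match removeRightmost (· == BSym.hb) B with
    | some B' => (O, B')
    | none => (O ++ [BSym.ho], B)
  | (O, B), BSym.co =>
    match removeRightmost (· == BSym.cb) B with
    | some B' => (O, B')
    | none => (O ++ [BSym.co], B)
  | (O, B), BSym.fo =>
    match removeRightmost (fun _ => true) B with
    | some B' => (O, B')
    | none => (O ++ [BSym.fo], B)

/-- The reduced form `R(w)` of a word, as a pair (orders, burgers). -/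
def reduceWord (w : List BSym) : List BSym × List BSym := w.foldl burgerStep ([], [])

/-- The length `|R(w)|` of the reduced word. -/
def reducedLength (w : List BSym) : ℕ :=
  (reduceWord w).1.length + (reduceWord w).2.length

/-- The subword `X_a ⋯ X_b` of a bi-infinite word (empty if `a > b`). -/
def seg (x : ℤ → BSym) (a b : ℤ) : List BSym :=
  (List.range (b + 1 - a).toNat).map (fun k => x (a + k))

/-- A time `i ≥ 1` is ancestor-free for the word `X` if the reduced word `X(k,i)`
contains an order for every `k ∈ {1,…,i}`. -/
def AncestorFree (X : ℤ → BSym) (i : ℕ) : Prop :=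
  1 ≤ i ∧ ∀ k : ℕ, 1 ≤ k → k ≤ i → (reduceWord (seg X (k : ℤ) (i : ℤ))).1 ≠ []

/-!
Running the reduction from a burger stack `B₁` that contains `B₂` as a sublist leaves no
order unmatched that would be matched from `B₂`: as long as no order survives, the two stacks
stay nested. Hence, if `X(a, k-1)` reduces to burgers only, `X(k, b)` contains an order
whenever `X(a, b)` does. With `a = I_m + 1` and `b = I_{m+1}` this carries the
ancestor-freeness of `I_m` over to `I_{m+1}`. Conversely, a time `i` with `I_m < i < I_{m+1}`
is not ancestor-free, as `X(I_m + 1, i)` contains no order by minimality of `I_{m+1}`.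
-/

open List

theorem removeRightmost_eq_reverse_eraseP (P : BSym → Bool) (l : List BSym) :
    removeRightmost P l = if l.any P then some (l.reverse.eraseP P).reverse else none := by
  induction l with
  | nil => rfl
  | cons a l ih =>
    rw [removeRightmost, ih]
    by_cases hl : ∃ x ∈ l, P x
    · simp [hl, List.eraseP_append]
    · cases ha : P a <;> simp [hl, ha, List.eraseP_append]

theorem List.Sublist.removeRightmost {P : BSym → Bool} {B₁ B₂ B₂' : List BSym}
    (hB : B₂ <+ B₁) (h₂ : removeRightmost P B₂ = some B₂') :
    ∃ B₁', removeRightmost P B₁ = some B₁' ∧ B₂' <+ B₁' := by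
  rw [removeRightmost_eq_reverse_eraseP] at h₂ ⊢
  split_ifs at h₂ with hany
  cases h₂
  have : B₁.any P := by
    simp only [List.any_eq_true] at hany ⊢
    obtain ⟨a, ha, hPa⟩ := hany
    exact ⟨a, hB.subset ha, hPa⟩
  exact ⟨_, if_pos this, hB.reverse.eraseP.reverse⟩

theorem burgerStep_fst_prefix (s : List BSym × List BSym) (x : BSym) :
    s.1 <+: (burgerStep s x).1 := by
  obtain ⟨O, B⟩ := s
  cases x <;> simp only [burgerStep] <;> try split
  all_goals simp

theorem foldl_burgerStep_fst_prefix (s : List BSym × List BSym) (v : List BSym) :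
    s.1 <+: (v.foldl burgerStep s).1 := by
  induction v generalizing s with
  | nil => exact List.prefix_refl _
  | cons x v ih => exact (burgerStep_fst_prefix s x).trans (ih _)

theorem reduceWord_append (u v : List BSym) :
    reduceWord (u ++ v) = v.foldl burgerStep (reduceWord u) :=
  List.foldl_append

theorem reduceWord_fst_ne_nil_append_right {u : List BSym} (h : (reduceWord u).1 ≠ [])
    (v : List BSym) : (reduceWord (u ++ v)).1 ≠ [] := by
  intro huv
  have := foldl_burgerStep_fst_prefix (reduceWord u) v
  rw [← reduceWord_append, huv, List.prefix_nil] at this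
  exact h this

theorem burgerStep_fst_eq_nil_and_snd_sublist {B₁ B₂ : List BSym} (hB : B₂ <+ B₁) {x : BSym}
    (h : (burgerStep ([], B₂) x).1 = []) :
    (burgerStep ([], B₁) x).1 = [] ∧
      (burgerStep ([], B₂) x).2 <+ (burgerStep ([], B₁) x).2 := by
  cases x
  case hb | cb => exact ⟨rfl, hB.append_right _⟩
  all_goals
    simp only [burgerStep] at h ⊢
    rcases h₂ : removeRightmost _ B₂ with _ | B₂'
    · simp [h₂] at h
    · obtain ⟨B₁', h₁, hsub⟩ := hB.removeRightmost h₂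
      simpa [h₁] using hsub

theorem foldl_burgerStep_fst_eq_nil_of_sublist {B₁ B₂ : List BSym} (hB : B₂ <+ B₁)
    (v : List BSym) (h : (v.foldl burgerStep ([], B₂)).1 = []) :
    (v.foldl burgerStep ([], B₁)).1 = [] := by
  induction v generalizing B₁ B₂ with
  | nil => rfl
  | cons x v ih =>
    rw [List.foldl_cons] at h
    have hx : (burgerStep ([], B₂) x).1 = [] := by
      have := foldl_burgerStep_fst_prefix (burgerStep ([], B₂) x) v
      rwa [h, List.prefix_nil] at this
    obtain ⟨h₁, hsub⟩ := burgerStep_fst_eq_nil_and_snd_sublist hB hx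
    have e₁ : burgerStep ([], B₁) x = ([], (burgerStep ([], B₁) x).2) := Prod.ext h₁ rfl
    have e₂ : burgerStep ([], B₂) x = ([], (burgerStep ([], B₂) x).2) := Prod.ext hx rfl
    rw [e₂] at h
    rw [List.foldl_cons, e₁]
    exact ih hsub h

theorem reduceWord_fst_ne_nil_of_append {u v : List BSym} (hu : (reduceWord u).1 = [])
    (huv : (reduceWord (u ++ v)).1 ≠ []) : (reduceWord v).1 ≠ [] := by
  intro hv
  have e : reduceWord u = ([], (reduceWord u).2) := Prod.ext hu rfl
  rw [reduceWord_append, e] at huv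
  exact huv (foldl_burgerStep_fst_eq_nil_of_sublist (List.nil_sublist _) v hv)

theorem seg_eq_map_range (x : ℤ → BSym) (a b : ℤ) :
    seg x a b = (List.range (b + 1 - a).toNat).map (fun k : ℕ => x (a + k)) := by
  simp only [seg, bind_pure_comp, List.map_eq_map, List.map_map]
  rfl

theorem seg_append (x : ℤ → BSym) {a b c : ℤ} (hab : a ≤ b + 1) (hbc : b ≤ c) :
    seg x a c = seg x a b ++ seg x (b + 1) c := by
  have hlen : (c + 1 - a).toNat = (b + 1 - a).toNat + (c + 1 - (b + 1)).toNat := by omega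
  simp only [seg_eq_map_range, hlen, List.range_add, List.map_append, List.map_map]
  congr 1
  refine List.map_congr_left fun k _ => ?_
  simp only [Function.comp_apply]
  congr 1
  omega

theorem seg_eq_nil (x : ℤ → BSym) {a b : ℤ} (h : b < a) : seg x a b = [] := by
  simp [seg_eq_map_range, Int.toNat_eq_zero.2 (by omega : b + 1 - a ≤ 0)]

theorem StrictMono.exists_lt_le_succ {f : ℕ → ℕ} (hf : StrictMono f) {i : ℕ}
    (hi : f 0 < i) :
    ∃ m, f m < i ∧ i ≤ f (m + 1) := by
  have hex : ∃ n, i ≤ f n := ⟨i, hf.id_le i⟩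
  obtain ⟨m, hm⟩ : ∃ m, Nat.find hex = m + 1 :=
    Nat.exists_eq_succ_of_ne_zero fun h => by
      have := Nat.find_spec hex
      rw [h] at this
      omega
  exact ⟨m, not_le.1 (Nat.find_min hex (by omega)), hm ▸ Nat.find_spec hex⟩

structure IsOrderRenewal (X : ℤ → BSym) (I : ℕ → ℕ) : Prop where
  zero : I 0 = 0
  lt_succ : ∀ m, I m < I (m + 1)
  order : ∀ m, (reduceWord (seg X ((I m : ℤ) + 1) (I (m + 1) : ℤ))).1 ≠ []
  min : ∀ m i, I m < i → i < I (m + 1) →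
    (reduceWord (seg X ((I m : ℤ) + 1) (i : ℤ))).1 = []

namespace IsOrderRenewal

variable {X : ℤ → BSym} {I : ℕ → ℕ}

theorem strictMono (hI : IsOrderRenewal X I) : StrictMono I :=
  strictMono_nat_of_lt_succ hI.lt_succ

theorem reduceWord_seg_fst_ne_nil (hI : IsOrderRenewal X I) (m : ℕ) :
    ∀ k : ℕ, 1 ≤ k → k ≤ I m → (reduceWord (seg X k (I m))).1 ≠ [] := by
  induction m with
  | zero => intro k hk hkI; rw [hI.zero] at hkI; omega
  | succ m ih =>
    intro k hk hkI
    have hIm := hI.lt_succ m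
    rcases le_or_gt k (I m) with hkm | hkm
    · rw [seg_append X (b := I m) (by omega) (by omega)]
      exact reduceWord_fst_ne_nil_append_right (ih k hk hkm) _
    · have hprefix : (reduceWord (seg X (I m + 1) (k - 1))).1 = [] := by
        rcases (Nat.succ_le_of_lt hkm).eq_or_lt with hk' | hk'
        · rw [seg_eq_nil X (by omega)]
          rfl
        · simpa [Nat.cast_sub hk] using hI.min m (k - 1) (by omega) (by omega)
      have hsplit := seg_append X (a := I m + 1) (b := (k : ℤ) - 1) (c := I (m + 1))
        (by omega) (by omega)
      rw [sub_add_cancel] at hsplit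
      exact reduceWord_fst_ne_nil_of_append hprefix (hsplit ▸ hI.order m)

theorem ancestorFree (hI : IsOrderRenewal X I) {m : ℕ} (hm : 1 ≤ m) : AncestorFree X (I m) :=
  ⟨hm.trans (hI.strictMono.id_le m), hI.reduceWord_seg_fst_ne_nil m⟩

theorem exists_eq_of_ancestorFree (hI : IsOrderRenewal X I) {i : ℕ} (hi : AncestorFree X i) :
    ∃ m, 1 ≤ m ∧ I m = i := by
  obtain ⟨m, hm, him⟩ := hI.strictMono.exists_lt_le_succ (by rw [hI.zero]; exact hi.1)
  refine ⟨m + 1, by omega, ?_⟩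
  by_contra hne
  exact hi.2 (I m + 1) (by omega) (by omega) (by exact_mod_cast hI.min m i hm (by omega))

end IsOrderRenewal

/-- **Ancestor-free times are the order renewal times.** Let `I₀ = 0` and
inductively let `I_m` be the smallest `i ≥ I_{m-1}+1` for which
`X(I_{m-1}+1, i)` contains an order.  Then the times `I_m` for `m ≥ 1` are exactly
the ancestor-free times: `I_m` is the `m`-th smallest ancestor-free time in `ℕ`. -/
theorem ancestorFree_eq_orderRenewal
    (X : ℤ → BSym) (I : ℕ → ℕ) (hI0 : I 0 = 0)
    (hmono : ∀ m : ℕ, I m < I (m + 1))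
    (horder : ∀ m : ℕ, (reduceWord (seg X ((I m : ℤ) + 1) (I (m + 1) : ℤ))).1 ≠ [])
    (hmin : ∀ m : ℕ, ∀ i : ℕ, I m < i → i < I (m + 1) →
      (reduceWord (seg X ((I m : ℤ) + 1) (i : ℤ))).1 = []) :
    ∀ i : ℕ, AncestorFree X i ↔ ∃ m : ℕ, 1 ≤ m ∧ I m = i := by
  have hI : IsOrderRenewal X I := ⟨hI0, hmono, horder, hmin⟩
  intro i
  refine ⟨hI.exists_eq_of_ancestorFree, ?_⟩
  rintro ⟨m, hm, rfl⟩
  exact hI.ancestorFree hm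
end

section
/- Consider the reduced-word model with a flexible order: if i ∈ ℤ satisfies X_i = F (flexible order) and the match φ(i) of i satisfies X_{φ(i)} = C (cheeseburger), then the reduced word X(φ(i), i) of the segment from the match to the flexible order contains only hamburger orders (symbols h), i.e. it contains no burgers, no cheeseburger orders, and no flexible orders. -/
/-- Remove the rightmost indexed element whose symbol satisfies `P` (if any). -/
def removeRightmostI (P : BSym → Bool) : List (ℤ × BSym) → Option (List (ℤ × BSym))
  | [] => none
  | a :: l =>
    match removeRightmostI P l with
    | some l' => some (a :: l')
    | none => if P a.2 then some l else none

/-- One step of the index-tracking word reduction: the state is the pair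
(orders, burgers) of the reduced word, each letter carrying its position in `ℤ`.
Burgers are appended to the burger stack; an order consumes the freshest matching
burger (a flexible order consumes the freshest burger of either type), or is
appended to the order list. -/
def burgerStepI : List (ℤ × BSym) × List (ℤ × BSym) → ℤ × BSym →
    List (ℤ × BSym) × List (ℤ × BSym)
  | (O, B), (i, BSym.hb) => (O, B ++ [(i, BSym.hb)])
  | (O, B), (i, BSym.cb) => (O, B ++ [(i, BSym.cb)])
  | (O, B), (i, BSym.ho) =>
    match removeRightmostI (· == BSym.hb) B with
    | some B' => (O, B')
    | none => (O ++ [(i, BSym.ho)], B)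
  | (O, B), (i, BSym.co) =>
    match removeRightmostI (· == BSym.cb) B with
    | some B' => (O, B')
    | none => (O ++ [(i, BSym.co)], B)
  | (O, B), (i, BSym.fo) =>
    match removeRightmostI (fun _ => true) B with
    | some B' => (O, B')
    | none => (O ++ [(i, BSym.fo)], B)

/-- The reduced form of an indexed word, as a pair (orders, burgers). -/
def reduceWordI (w : List (ℤ × BSym)) : List (ℤ × BSym) × List (ℤ × BSym) :=
  w.foldl burgerStepI ([], [])

/-- The indexed subword `X_a ⋯ X_b` of a bi-infinite word (empty if `a > b`). -/
def segI (x : ℤ → BSym) (a b : ℤ) : List (ℤ × BSym) :=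
  (List.range (b + 1 - a).toNat).map (fun k => ((a + k : ℤ), x (a + k)))

/-- `φ` is the matching of the bi-infinite word `x`: it is an involution, and for
every finite segment `[a,b]`, a letter at position `i ∈ [a,b]` survives in the
reduced word of `X(a,b)` if and only if its match lies outside `[a,b]`. -/
def IsMatching (x : ℤ → BSym) (φ : ℤ → ℤ) : Prop :=
  (∀ i, φ (φ i) = i) ∧
  (∀ a b i : ℤ, a ≤ i → i ≤ b →
    (((i, x i) ∈ (reduceWordI (segI x a b)).1 ++ (reduceWordI (segI x a b)).2) ↔
      (φ i < a ∨ b < φ i)))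

/-- `φ_*(i)`: the index of the match of the rightmost order of the reduced word
`X(φ(i), i)`, or `φ(i)` if that word contains no orders. -/
def phiStar (x : ℤ → BSym) (φ : ℤ → ℤ) (i : ℤ) : ℤ :=
  match (reduceWordI (segI x (φ i) i)).1.getLast? with
  | none => φ i
  | some q => φ q.1

section AuxLemmas

lemma removeRightmostI_eq_some_of_mem {P : BSym → Bool} {p : ℤ × BSym} :
    ∀ {l : List (ℤ × BSym)}, p ∈ l → P p.2 = true →
    ∃ l', removeRightmostI P l = some l' := by
  intro l
  induction l with
  | nil => intro h; simp at h
  | cons a t ih =>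
    intro hp hP
    rcases List.mem_cons.1 hp with rfl | hp'
    · cases hrec : removeRightmostI P t with
      | some t' => exact ⟨p :: t', by simp [removeRightmostI, hrec]⟩
      | none => exact ⟨t, by simp [removeRightmostI, hrec, hP]⟩
    · obtain ⟨t', ht'⟩ := ih hp' hP
      exact ⟨a :: t', by simp [removeRightmostI, ht']⟩

lemma removeRightmostI_true :
    ∀ (l : List (ℤ × BSym)), l ≠ [] →
      removeRightmostI (fun _ => true) l = some l.dropLast := by
  intro l
  induction l with
  | nil => intro h; simp at h
  | cons a t ih =>
    intro _
    cases t with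
    | nil => simp [removeRightmostI]
    | cons b t' =>
      have h2 := ih (by simp)
      rw [removeRightmostI, h2, List.dropLast_cons₂]

lemma removeRightmostI_sublist {P : BSym → Bool} :
    ∀ {l l' : List (ℤ × BSym)}, removeRightmostI P l = some l' → l'.Sublist l := by
  intro l
  induction l with
  | nil => intro l' h; simp [removeRightmostI] at h
  | cons a t ih =>
    intro l' h
    rw [removeRightmostI] at h
    cases hrec : removeRightmostI P t with
    | some t' =>
      rw [hrec] at h
      injection h with h
      subst h
      exact (ih hrec).cons₂ a
    | none =>
      rw [hrec] at h
      by_cases hP : P a.2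
      · rw [if_pos hP] at h
        injection h with h
        subst h
        exact List.sublist_cons_self a t
      · rw [if_neg hP] at h
        cases h

lemma segI_eq_nil {x : ℤ → BSym} {a b : ℤ} (h : b < a) : segI x a b = [] := by
  unfold segI
  have : (b + 1 - a).toNat = 0 := by omega
  rw [this]
  simp

lemma segI_succ {x : ℤ → BSym} {a b : ℤ} (h : a ≤ b) :
    segI x a b = segI x a (b - 1) ++ [(b, x b)] := by
  unfold segI
  have h1 : (b + 1 - a).toNat = (b - 1 + 1 - a).toNat + 1 := by omega
  rw [h1, List.range_succ]
  simp
  refine ⟨by omega, ?_⟩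
  congr 1
  omega

lemma mem_segI {x : ℤ → BSym} {a b : ℤ} {j : ℤ} {s : BSym} :
    (j, s) ∈ segI x a b ↔ a ≤ j ∧ j ≤ b ∧ s = x j := by
  unfold segI
  simp only [List.mem_map, List.mem_range]
  constructor
  · rintro ⟨k, hk, hke⟩
    simp at hk
    obtain ⟨m, hm, rfl⟩ := hk
    have h1 : j = a + m := (Prod.mk.injEq .. ▸ hke).1.symm
    have h2 : s = x (a + m) := by
      have := (Prod.mk.injEq .. ▸ hke).2
      rw [← this]
    subst h1
    refine ⟨by omega, by omega, by rw [h2]⟩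
  · rintro ⟨h1, h2, h3⟩
    refine ⟨(j - a).toNat, ?_, ?_⟩
    · simp
      exact ⟨(j - a).toNat, by omega, by omega⟩
    · have : a + ((j - a).toNat : ℤ) = j := by omega
      rw [this, ← h3]

lemma reduce_snoc {x : ℤ → BSym} {a b : ℤ} (h : a ≤ b) :
    reduceWordI (segI x a b) = burgerStepI (reduceWordI (segI x a (b - 1))) (b, x b) := by
  rw [segI_succ h]
  simp [reduceWordI, List.foldl_append]

/-- Invariant of the reduced state of `X(a,b)`: all letters carry indices in `[a,b]`
and their own symbol, orders are orders, burgers are burgers, and the burger stack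
has strictly increasing indices. -/
def StInv (x : ℤ → BSym) (a b : ℤ) (s : List (ℤ × BSym) × List (ℤ × BSym)) : Prop :=
  (∀ p ∈ s.1, a ≤ p.1 ∧ p.1 ≤ b ∧ p.2 = x p.1 ∧
      (p.2 = BSym.ho ∨ p.2 = BSym.co ∨ p.2 = BSym.fo)) ∧
  (∀ p ∈ s.2, a ≤ p.1 ∧ p.1 ≤ b ∧ p.2 = x p.1 ∧
      (p.2 = BSym.hb ∨ p.2 = BSym.cb)) ∧
  s.2.Pairwise (fun p q => p.1 < q.1)

lemma stInv_step {x : ℤ → BSym} {a b : ℤ} {s : List (ℤ × BSym) × List (ℤ × BSym)}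
    (hab : a ≤ b) (h : StInv x a (b - 1) s) :
    StInv x a b (burgerStepI s (b, x b)) := by
  obtain ⟨O, B⟩ := s
  obtain ⟨h1, h2, h3⟩ := h
  simp only [StInv] at *
  have hOle : ∀ p ∈ O, a ≤ p.1 ∧ p.1 ≤ b ∧ p.2 = x p.1 ∧
      (p.2 = BSym.ho ∨ p.2 = BSym.co ∨ p.2 = BSym.fo) := by
    intro p hp; obtain ⟨u, v, w, z⟩ := h1 p hp; exact ⟨u, by omega, w, z⟩
  have hBle : ∀ p ∈ B, a ≤ p.1 ∧ p.1 ≤ b ∧ p.2 = x p.1 ∧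
      (p.2 = BSym.hb ∨ p.2 = BSym.cb) := by
    intro p hp; obtain ⟨u, v, w, z⟩ := h2 p hp; exact ⟨u, by omega, w, z⟩
  have hcons : ∀ B' : List (ℤ × BSym), B'.Sublist B →
      (∀ p ∈ (O, B').1, a ≤ p.1 ∧ p.1 ≤ b ∧ p.2 = x p.1 ∧
        (p.2 = BSym.ho ∨ p.2 = BSym.co ∨ p.2 = BSym.fo)) ∧
      (∀ p ∈ (O, B').2, a ≤ p.1 ∧ p.1 ≤ b ∧ p.2 = x p.1 ∧
        (p.2 = BSym.hb ∨ p.2 = BSym.cb)) ∧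
      (O, B').2.Pairwise (fun p q => p.1 < q.1) := by
    intro B' hsub
    exact ⟨hOle, fun p hp => hBle p (hsub.mem hp), h3.sublist hsub⟩
  have happb : ∀ c : BSym, c = x b → (c = BSym.hb ∨ c = BSym.cb) →
      (∀ p ∈ (O, B ++ [(b, c)]).1, a ≤ p.1 ∧ p.1 ≤ b ∧ p.2 = x p.1 ∧
        (p.2 = BSym.ho ∨ p.2 = BSym.co ∨ p.2 = BSym.fo)) ∧
      (∀ p ∈ (O, B ++ [(b, c)]).2, a ≤ p.1 ∧ p.1 ≤ b ∧ p.2 = x p.1 ∧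
        (p.2 = BSym.hb ∨ p.2 = BSym.cb)) ∧
      (O, B ++ [(b, c)]).2.Pairwise (fun p q => p.1 < q.1) := by
    intro c hc hcb
    refine ⟨hOle, ?_, ?_⟩
    · intro p hp
      rcases List.mem_append.1 hp with hp | hp
      · exact hBle p hp
      · simp at hp
        subst hp
        exact ⟨hab, le_refl b, hc, hcb⟩
    · rw [List.pairwise_append]
      refine ⟨h3, List.pairwise_singleton _ _, ?_⟩
      intro p hp q hq
      simp at hq
      subst hq
      have := (h2 p hp).2.1
      simp
      omega
  have happo : ∀ c : BSym, c = x b → (c = BSym.ho ∨ c = BSym.co ∨ c = BSym.fo) →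
      (∀ p ∈ (O ++ [(b, c)], B).1, a ≤ p.1 ∧ p.1 ≤ b ∧ p.2 = x p.1 ∧
        (p.2 = BSym.ho ∨ p.2 = BSym.co ∨ p.2 = BSym.fo)) ∧
      (∀ p ∈ (O ++ [(b, c)], B).2, a ≤ p.1 ∧ p.1 ≤ b ∧ p.2 = x p.1 ∧
        (p.2 = BSym.hb ∨ p.2 = BSym.cb)) ∧
      (O ++ [(b, c)], B).2.Pairwise (fun p q => p.1 < q.1) := by
    intro c hc hco
    refine ⟨?_, hBle, h3⟩
    intro p hp
    rcases List.mem_append.1 hp with hp | hp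
    · exact hOle p hp
    · simp at hp
      subst hp
      exact ⟨hab, le_refl b, hc, hco⟩
  cases hxb : x b with
  | hb => simpa only [burgerStepI] using happb BSym.hb hxb.symm (Or.inl rfl)
  | cb => simpa only [burgerStepI] using happb BSym.cb hxb.symm (Or.inr rfl)
  | ho =>
    simp only [burgerStepI]
    cases hrr : removeRightmostI (· == BSym.hb) B with
    | some B' => exact hcons B' (removeRightmostI_sublist hrr)
    | none => exact happo BSym.ho hxb.symm (Or.inl rfl)
  | co =>
    simp only [burgerStepI]
    cases hrr : removeRightmostI (· == BSym.cb) B with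
    | some B' => exact hcons B' (removeRightmostI_sublist hrr)
    | none => exact happo BSym.co hxb.symm (Or.inr (Or.inl rfl))
  | fo =>
    simp only [burgerStepI]
    cases hrr : removeRightmostI (fun _ => true) B with
    | some B' => exact hcons B' (removeRightmostI_sublist hrr)
    | none => exact happo BSym.fo hxb.symm (Or.inr (Or.inr rfl))

lemma stInv_reduce (x : ℤ → BSym) (a b : ℤ) : StInv x a b (reduceWordI (segI x a b)) := by
  obtain ⟨n, hn⟩ : ∃ n : ℕ, (b + 1 - a).toNat = n := ⟨_, rfl⟩
  induction n generalizing b with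
  | zero =>
    have hba : b < a := by omega
    rw [segI_eq_nil hba]
    simp [StInv, reduceWordI]
  | succ n ih =>
    have hab : a ≤ b := by omega
    rw [reduce_snoc hab]
    exact stInv_step hab (ih (b - 1) (by omega))

end AuxLemmas

lemma burgerStepI_fo_eq {s : List (ℤ × BSym) × List (ℤ × BSym)} {i : ℤ}
    {B' : List (ℤ × BSym)} (h : removeRightmostI (fun _ => true) s.2 = some B') :
    burgerStepI s (i, BSym.fo) = (s.1, B') := by
  rw [← Prod.mk.eta (p := s)]
  simp only [burgerStepI]
  rw [h]

lemma burgerStepI_co_eq {s : List (ℤ × BSym) × List (ℤ × BSym)} {i : ℤ}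
    {B' : List (ℤ × BSym)} (h : removeRightmostI (· == BSym.cb) s.2 = some B') :
    burgerStepI s (i, BSym.co) = (s.1, B') := by
  rw [← Prod.mk.eta (p := s)]
  simp only [burgerStepI]
  rw [h]

/-- **Structure of a flexible-order excursion.** If `X_i = F` is a flexible order
whose match `φ(i) < i` carries a cheeseburger (`X_{φ(i)} = C`), then the reduced
word `X(φ(i), i)` contains only hamburger orders: every surviving letter (order or
burger) of the segment from the match to the flexible order is a hamburger order. -/
theorem flexible_order_excursion_only_hamburger_orders
    (x : ℤ → BSym) (φ : ℤ → ℤ) (hmatch : IsMatching x φ)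
    (i : ℤ) (hfo : x i = BSym.fo) (hlt : φ i < i) (hcb : x (φ i) = BSym.cb) :
    ∀ q ∈ (reduceWordI (segI x (φ i) i)).1 ++ (reduceWordI (segI x (φ i) i)).2,
      q.2 = BSym.ho := by
  obtain ⟨hinvol, hsurv⟩ := hmatch
  set a := φ i with ha
  have hai : φ a = i := hinvol i
  have hlt' : a < i := hlt
  -- the flexible order at `i` is consumed within the segment
  have hnot_i : (i, x i) ∉
      (reduceWordI (segI x a i)).1 ++ (reduceWordI (segI x a i)).2 := by
    intro hmem
    rcases (hsurv a i i (le_of_lt hlt') le_rfl).1 hmem with h | h <;> omega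
  -- the cheeseburger at `a` is consumed within the segment
  have hnot_a : (a, x a) ∉
      (reduceWordI (segI x a i)).1 ++ (reduceWordI (segI x a i)).2 := by
    intro hmem
    rcases (hsurv a i a le_rfl (le_of_lt hlt')).1 hmem with h | h <;> omega
  -- before time `i`, the cheeseburger at `a` is still on the burger stack
  have hmem_a : ∀ k, a ≤ k → k ≤ i - 1 →
      (a, x a) ∈ (reduceWordI (segI x a k)).2 := by
    intro k hk1 hk2
    have hm := (hsurv a k a le_rfl hk1).2 (Or.inr (by omega))
    rcases List.mem_append.1 hm with h | h
    · have := ((stInv_reduce x a k).1 _ h).2.2.2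
      simp only [hcb] at this
      rcases this with h' | h' | h' <;> cases h'
    · exact h
  -- process the last letter (the flexible order)
  have hstepi := reduce_snoc (x := x) (a := a) (b := i) (le_of_lt hlt')
  rw [hfo] at hstepi
  have hmem_al : (a, x a) ∈ (reduceWordI (segI x a (i - 1))).2 :=
    hmem_a (i - 1) (by omega) le_rfl
  have hlne : (reduceWordI (segI x a (i - 1))).2 ≠ [] := by
    intro h; rw [h] at hmem_al; simp at hmem_al
  have hrr := removeRightmostI_true _ hlne
  rw [burgerStepI_fo_eq hrr] at hstepi
  -- the cheeseburger is the last element of the burger stack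
  have hgetlast : (a, x a) ∉ (reduceWordI (segI x a (i - 1))).2.dropLast := by
    intro h
    exact hnot_a (by rw [hstepi]; exact List.mem_append_right _ h)
  have hdec := List.dropLast_append_getLast hlne
  have hlast : (reduceWordI (segI x a (i - 1))).2.getLast hlne = (a, x a) := by
    rw [← hdec] at hmem_al
    rcases List.mem_append.1 hmem_al with h | h
    · exact absurd h hgetlast
    · rw [List.mem_singleton] at h
      exact h.symm
  -- hence it is the only element of the burger stack
  have hpairs : (reduceWordI (segI x a (i - 1))).2.Pairwise (fun p q => p.1 < q.1) :=
    (stInv_reduce x a (i - 1)).2.2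
  have hdrop_nil : (reduceWordI (segI x a (i - 1))).2.dropLast = [] := by
    rw [List.eq_nil_iff_forall_not_mem]
    intro p hp
    rw [← hdec] at hpairs
    have h1 : p.1 < ((reduceWordI (segI x a (i - 1))).2.getLast hlne).1 :=
      (List.pairwise_append.1 hpairs).2.2 p hp _ (by simp)
    rw [hlast] at h1
    have h2 : a ≤ p.1 := by
      have hsub : (reduceWordI (segI x a (i - 1))).2.dropLast.Sublist
          (reduceWordI (segI x a (i - 1))).2 := List.dropLast_sublist _
      exact ((stInv_reduce x a (i - 1)).2.1 p (hsub.mem hp)).1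
    omega
  rw [hdrop_nil] at hstepi
  -- now analyze the surviving orders
  intro q hq
  rw [hstepi] at hq
  simp only [List.append_nil] at hq
  obtain ⟨j, s⟩ := q
  obtain ⟨hja, hji, hsx, hord⟩ := (stInv_reduce x a (i - 1)).1 _ hq
  simp only at hja hji hsx hord ⊢
  rcases hord with hs | hs | hs
  · exact hs
  -- a surviving cheeseburger order is impossible
  · exfalso
    have hxj : x j = BSym.co := hsx.symm.trans hs
    have hjne : a < j := by
      rcases lt_or_eq_of_le hja with h | h
      · exact h
      · rw [← h] at hxj
        rw [hcb] at hxj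
        cases hxj
    have hsurvj : φ j < a ∨ j < φ j := by
      have hm : (j, x j) ∈
          (reduceWordI (segI x a i)).1 ++ (reduceWordI (segI x a i)).2 := by
        rw [hstepi]
        exact List.mem_append_left _ (by rw [← hsx]; exact hq)
      rcases (hsurv a i j (by omega) (by omega)).1 hm with h | h
      · exact Or.inl h
      · exact Or.inr (by omega)
    have hmj := (hsurv a j j (by omega) le_rfl).2 hsurvj
    have hmj1 : (j, x j) ∈ (reduceWordI (segI x a j)).1 := by
      rcases List.mem_append.1 hmj with h | h
      · exact h
      · have := ((stInv_reduce x a j).2.1 _ h).2.2.2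
        simp only [hxj] at this
        rcases this with h' | h' <;> cases h'
    have hstepj := reduce_snoc (x := x) (a := a) (b := j) (by omega)
    rw [hxj] at hstepj
    have hmem_aj : (a, x a) ∈ (reduceWordI (segI x a (j - 1))).2 :=
      hmem_a (j - 1) (by omega) (by omega)
    obtain ⟨B', hB'⟩ := removeRightmostI_eq_some_of_mem (P := (· == BSym.cb)) hmem_aj (by simp [hcb])
    rw [burgerStepI_co_eq hB'] at hstepj
    rw [hstepj] at hmj1
    have := ((stInv_reduce x a (j - 1)).1 _ hmj1).2.1
    simp only at this
    omega
  -- a surviving flexible order is impossible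
  · exfalso
    have hxj : x j = BSym.fo := hsx.symm.trans hs
    have hjne : a < j := by
      rcases lt_or_eq_of_le hja with h | h
      · exact h
      · rw [← h] at hxj
        rw [hcb] at hxj
        cases hxj
    have hsurvj : φ j < a ∨ j < φ j := by
      have hm : (j, x j) ∈
          (reduceWordI (segI x a i)).1 ++ (reduceWordI (segI x a i)).2 := by
        rw [hstepi]
        exact List.mem_append_left _ (by rw [← hsx]; exact hq)
      rcases (hsurv a i j (by omega) (by omega)).1 hm with h | h
      · exact Or.inl h
      · exact Or.inr (by omega)
    have hmj := (hsurv a j j (by omega) le_rfl).2 hsurvj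
    have hmj1 : (j, x j) ∈ (reduceWordI (segI x a j)).1 := by
      rcases List.mem_append.1 hmj with h | h
      · exact h
      · have := ((stInv_reduce x a j).2.1 _ h).2.2.2
        simp only [hxj] at this
        rcases this with h' | h' <;> cases h'
    have hstepj := reduce_snoc (x := x) (a := a) (b := j) (by omega)
    rw [hxj] at hstepj
    have hmem_aj : (a, x a) ∈ (reduceWordI (segI x a (j - 1))).2 :=
      hmem_a (j - 1) (by omega) (by omega)
    obtain ⟨B', hB'⟩ := removeRightmostI_eq_some_of_mem (P := fun _ => true) hmem_aj rfl
    rw [burgerStepI_fo_eq hB'] at hstepj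
    rw [hstepj] at hmj1
    have := ((stInv_reduce x a (j - 1)).1 _ hmj1).2.1
    simp only at this
    omega
end
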